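/- arXiv:1607.05100 — 2 statements merged into one kernel-verified Lean document; each statement's English description precedes it below -/
import Mathlib

section
/- (Multiplication formula for the RQFT.) Let f, g ∈ L¹(ℝ²,ℍ), let h := αg, H := ℱ_r h and F := ℱ_r f. Then ∫_{ℝ²} F(x₁,x₂) g(x₁,x₂) dx₁ dx₂ = ∫_{ℝ²} f(x₁,x₂) H(x₁,x₂) dx₁ dx₂. Moreover, if in addition g ∈ L²(ℝ²,ℍ), then ‖g‖₂ = ‖h‖₂. -/
open MeasureTheory Real ENNReal

noncomputable section

/-- The real quaternions. -/
abbrev Hq := Quaternion ℝ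

/-- The imaginary unit `i`. -/
def qi : Hq := ⟨0,1,0,0⟩
/-- The imaginary unit `j`. -/
def qj : Hq := ⟨0,0,1,0⟩
/-- The imaginary unit `k`. -/
def qk : Hq := ⟨0,0,0,1⟩

/-- For a (unit pure imaginary) quaternion `u`, `e^{uθ} := cos θ + u sin θ`. -/
def qexp (u : Hq) (θ : ℝ) : Hq := (Real.cos θ) • (1 : Hq) + (Real.sin θ) • u

/-- The right-sided quaternion Fourier transform of `f ∈ L¹(ℝ²,ℍ)`. -/
def Fr (f : ℝ × ℝ → Hq) (ω : ℝ × ℝ) : Hq :=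
  (1 / (2 * Real.pi)) • ∫ x : ℝ × ℝ, f x * qexp qi (-(ω.1 * x.1)) * qexp qj (-(ω.2 * x.2))

/-- The two-sided quaternion Fourier transform of `f ∈ L¹(ℝ²,ℍ)`. -/
def Fs (f : ℝ × ℝ → Hq) (ω : ℝ × ℝ) : Hq :=
  (1 / (2 * Real.pi)) • ∫ x : ℝ × ℝ, qexp qi (-(ω.1 * x.1)) * f x * qexp qj (-(ω.2 * x.2))


/-- The transform alpha. -/
def alphaT (f : ℝ × ℝ → Hq) (x : ℝ × ℝ) : Hq :=
  ⟨(f x).re, (f (x.1, -x.2)).imI, (f (-x.1, x.2)).imJ, (f (-x.1, -x.2)).imK⟩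

/-!
Write `Fr f ω = (2π)⁻¹ ∫ f(x) K(ω,x) dx` with the kernel `K(ω,x) = e^{-iω₁x₁} e^{-jω₂x₂}`, which
has norm one and is symmetric in `ω` and `x`. Fubini turns `∫ Fr f · g` into
`(2π)⁻¹ ∫ f(y) (∫ K(y,x) g(x) dx) dy`. The kernel does not commute with `g`, but moving `i`, `j`,
`k` from its right to its left flips the sign of `x₂`, of `x₁`, or of both. Undoing that flip by
the corresponding reflection of the plane, which preserves Lebesgue measure, in each component of
`g` gives `∫ K(ω,x) g(x) dx = ∫ (αg)(x) K(ω,x) dx`, the Fourier integral of `αg`. The same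
reflections, applied to the four squared components of `|g|²`, show `‖αg‖₂ = ‖g‖₂`.
-/

open Function
open scoped Quaternion

section Reflection

variable {α E : Type*} [MeasurableSpace α] {μ : Measure α} {σ : α → α}
  [NormedAddCommGroup E] [NormedSpace ℝ E]

lemma Function.Involutive.measurableEmbedding (hinv : Involutive σ) (hσ : Measurable σ) :
    MeasurableEmbedding σ :=
  (MeasurableEquiv.ofInvolutive σ hinv hσ).measurableEmbedding

lemma MeasureTheory.MeasurePreserving.integral_comp_involutive (hσ : MeasurePreserving σ μ μ)
    (hinv : Involutive σ) (Φ : α → α → E) :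
    ∫ x, Φ x (σ x) ∂μ = ∫ x, Φ (σ x) x ∂μ := by
  simpa only [hinv _] using
    hσ.integral_comp (hinv.measurableEmbedding hσ.measurable) fun y => Φ (σ y) y

lemma MeasureTheory.MeasurePreserving.lintegral_comp_involutive (hσ : MeasurePreserving σ μ μ)
    (hinv : Involutive σ) (F : α → ℝ≥0∞) :
    ∫⁻ x, F (σ x) ∂μ = ∫⁻ x, F x ∂μ :=
  hσ.lintegral_comp_emb (hinv.measurableEmbedding hσ.measurable) F

end Reflection

section Additivity

variable {α E : Type*} [MeasurableSpace α] {μ : Measure α} [NormedAddCommGroup E]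
  [NormedSpace ℝ E]

lemma integral_add₄ {f₁ f₂ f₃ f₄ : α → E} (h₁ : Integrable f₁ μ) (h₂ : Integrable f₂ μ)
    (h₃ : Integrable f₃ μ) (h₄ : Integrable f₄ μ) :
    ∫ x, f₁ x + f₂ x + f₃ x + f₄ x ∂μ
      = ∫ x, f₁ x ∂μ + ∫ x, f₂ x ∂μ + ∫ x, f₃ x ∂μ + ∫ x, f₄ x ∂μ := by
  rw [integral_add (by fun_prop) h₄, integral_add (by fun_prop) h₃, integral_add h₁ h₂]

lemma lintegral_add₄ {f₁ f₂ f₃ f₄ : α → ℝ≥0∞} (h₁ : AEMeasurable f₁ μ) (h₂ : AEMeasurable f₂ μ)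
    (h₃ : AEMeasurable f₃ μ) :
    ∫⁻ x, f₁ x + f₂ x + f₃ x + f₄ x ∂μ
      = ∫⁻ x, f₁ x ∂μ + ∫⁻ x, f₂ x ∂μ + ∫⁻ x, f₃ x ∂μ + ∫⁻ x, f₄ x ∂μ := by
  rw [lintegral_add_left' (by fun_prop), lintegral_add_left' (by fun_prop),
    lintegral_add_left' h₁]

end Additivity

section Fubini

variable {α β A : Type*} [MeasurableSpace α] [MeasurableSpace β] {μ : Measure α}
  {ν : Measure β} [SFinite μ] [SFinite ν] [NormedRing A] [NormedAlgebra ℝ A]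

theorem integral_integral_mul_kernel_mul {f : β → A} {g : α → A} {K : α → β → A} {C : ℝ}
    (hf : Integrable f ν) (hg : Integrable g μ) (hK : StronglyMeasurable (uncurry K))
    (hKC : ∀ x y, ‖K x y‖ ≤ C) :
    ∫ x, (∫ y, f y * K x y ∂ν) * g x ∂μ = ∫ y, f y * ∫ x, K x y * g x ∂μ ∂ν := by
  have hprod : Integrable (uncurry fun x y => f y * K x y * g x) (μ.prod ν) := by
    refine ((hg.norm.mul_prod hf.norm).const_mul C).mono'
      ((hf.aestronglyMeasurable.comp_snd.mul hK.aestronglyMeasurable).mul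
        hg.aestronglyMeasurable.comp_fst) (ae_of_all _ fun z => ?_)
    calc ‖f z.2 * K z.1 z.2 * g z.1‖ ≤ ‖f z.2‖ * ‖K z.1 z.2‖ * ‖g z.1‖ := norm_mul₃_le
      _ ≤ ‖f z.2‖ * C * ‖g z.1‖ := by gcongr; exact hKC _ _
      _ = C * (‖g z.1‖ * ‖f z.2‖) := by ring
  have hK₁ (x : α) : Integrable (fun y => f y * K x y) ν :=
    hf.mul_bdd (hK.comp_measurable measurable_prodMk_left).aestronglyMeasurable
      (ae_of_all _ fun y => hKC x y)
  have hK₂ (y : β) : Integrable (fun x => K x y * g x) μ :=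
    hg.bdd_mul (hK.comp_measurable measurable_prodMk_right).aestronglyMeasurable
      (ae_of_all _ fun x => hKC x y)
  calc ∫ x, (∫ y, f y * K x y ∂ν) * g x ∂μ = ∫ x, ∫ y, f y * K x y * g x ∂ν ∂μ := by
        simp only [← integral_mul_const_of_integrable (hK₁ _)]
    _ = ∫ y, ∫ x, f y * K x y * g x ∂μ ∂ν := integral_integral_swap hprod
    _ = ∫ y, f y * ∫ x, K x y * g x ∂μ ∂ν := by
        simp only [mul_assoc, integral_const_mul_of_integrable (hK₂ _)]

end Fubini

lemma measurePreserving_neg_snd : MeasurePreserving fun x : ℝ × ℝ => (x.1, -x.2) :=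
  (MeasurePreserving.id volume).prod (Measure.measurePreserving_neg volume)

lemma measurePreserving_neg_fst : MeasurePreserving fun x : ℝ × ℝ => (-x.1, x.2) :=
  (Measure.measurePreserving_neg volume).prod (MeasurePreserving.id volume)

lemma measurePreserving_neg_prod : MeasurePreserving fun x : ℝ × ℝ => (-x.1, -x.2) :=
  (Measure.measurePreserving_neg volume).prod (Measure.measurePreserving_neg volume)

lemma involutive_neg_snd : Involutive fun x : ℝ × ℝ => (x.1, -x.2) := fun _ => by simp
lemma involutive_neg_fst : Involutive fun x : ℝ × ℝ => (-x.1, x.2) := fun _ => by simp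
lemma involutive_neg_prod : Involutive fun x : ℝ × ℝ => (-x.1, -x.2) := fun _ => by simp

-- `simp` cannot multiply the literals `⟨0, 1, 0, 0⟩`, so `qi`, `qj`, `qk` are kept folded.
@[simp] lemma qi_re_imI_imJ_imK : qi.re = 0 ∧ qi.imI = 1 ∧ qi.imJ = 0 ∧ qi.imK = 0 :=
  ⟨rfl, rfl, rfl, rfl⟩
@[simp] lemma qj_re_imI_imJ_imK : qj.re = 0 ∧ qj.imI = 0 ∧ qj.imJ = 1 ∧ qj.imK = 0 :=
  ⟨rfl, rfl, rfl, rfl⟩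
@[simp] lemma qk_re_imI_imJ_imK : qk.re = 0 ∧ qk.imI = 0 ∧ qk.imJ = 0 ∧ qk.imK = 1 :=
  ⟨rfl, rfl, rfl, rfl⟩

lemma quaternion_eq_sum (q : Hq) : q = q.re • 1 + q.imI • qi + q.imJ • qj + q.imK • qk := by
  ext <;> simp

lemma norm_eq_one_of_normSq_eq_one {q : Hq} (h : Quaternion.normSq q = 1) : ‖q‖ = 1 := by
  rwa [Quaternion.normSq_eq_norm_mul_self, ← sq,
    pow_eq_one_iff_of_nonneg (norm_nonneg q) two_ne_zero] at h

lemma enorm_sq_eq (q : Hq) :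
    ‖q‖ₑ ^ 2 = ENNReal.ofReal (q.re ^ 2) + ENNReal.ofReal (q.imI ^ 2)
      + ENNReal.ofReal (q.imJ ^ 2) + ENNReal.ofReal (q.imK ^ 2) := by
  rw [← ofReal_norm, ← ENNReal.ofReal_pow (norm_nonneg q), sq,
    ← Quaternion.normSq_eq_norm_mul_self, Quaternion.normSq_def', ENNReal.ofReal_add,
    ENNReal.ofReal_add, ENNReal.ofReal_add] <;> positivity

lemma norm_qexp {u : Hq} (hre : u.re = 0) (hu : Quaternion.normSq u = 1) (θ : ℝ) :
    ‖qexp u θ‖ = 1 := by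
  refine norm_eq_one_of_normSq_eq_one ?_
  rw [Quaternion.normSq_def'] at hu ⊢
  simp only [qexp]
  simp [hre] at hu ⊢
  linear_combination (Real.sin θ) ^ 2 * hu + Real.cos_sq_add_sin_sq θ

@[fun_prop]
lemma continuous_qexp (u : Hq) : Continuous (qexp u) := by
  unfold qexp; fun_prop

def rqftKernel (ω x : ℝ × ℝ) : Hq := qexp qi (-(ω.1 * x.1)) * qexp qj (-(ω.2 * x.2))

lemma Fr_eq_integral_mul_rqftKernel (f : ℝ × ℝ → Hq) (ω : ℝ × ℝ) :
    Fr f ω = (1 / (2 * π)) • ∫ x, f x * rqftKernel ω x := by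
  simp only [Fr, rqftKernel, mul_assoc]

lemma rqftKernel_comm (ω x : ℝ × ℝ) : rqftKernel ω x = rqftKernel x ω := by
  simp only [rqftKernel, mul_comm ω.1, mul_comm ω.2]

lemma continuous_rqftKernel : Continuous (uncurry rqftKernel) := by
  unfold rqftKernel; fun_prop

lemma norm_rqftKernel (ω x : ℝ × ℝ) : ‖rqftKernel ω x‖ = 1 := by
  rw [rqftKernel, norm_mul, norm_qexp rfl (by simp [Quaternion.normSq_def']),
    norm_qexp rfl (by simp [Quaternion.normSq_def']), mul_one]

lemma rqftKernel_mul_qi (ω x : ℝ × ℝ) :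
    rqftKernel ω x * qi = qi * rqftKernel ω (x.1, -x.2) := by
  ext <;> simp [rqftKernel, qexp]

lemma rqftKernel_mul_qj (ω x : ℝ × ℝ) :
    rqftKernel ω x * qj = qj * rqftKernel ω (-x.1, x.2) := by
  ext <;> simp [rqftKernel, qexp]

lemma rqftKernel_mul_qk (ω x : ℝ × ℝ) :
    rqftKernel ω x * qk = qk * rqftKernel ω (-x.1, -x.2) := by
  ext <;> simp [rqftKernel, qexp]

lemma rqftKernel_mul (ω x : ℝ × ℝ) (q : Hq) :
    rqftKernel ω x * q = q.re • rqftKernel ω x + q.imI • (qi * rqftKernel ω (x.1, -x.2))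
      + q.imJ • (qj * rqftKernel ω (-x.1, x.2)) + q.imK • (qk * rqftKernel ω (-x.1, -x.2)) := by
  conv_lhs => rw [quaternion_eq_sum q]
  simp only [mul_add, mul_smul_comm, mul_one, rqftKernel_mul_qi, rqftKernel_mul_qj,
    rqftKernel_mul_qk]

lemma MeasureTheory.Integrable.smul_mul_rqftKernel {c : ℝ × ℝ → ℝ} (hc : Integrable c) (u : Hq)
    (ω : ℝ × ℝ) {σ : ℝ × ℝ → ℝ × ℝ} (hσ : Continuous σ) :
    Integrable fun x => c x • (u * rqftKernel ω (σ x)) :=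
  hc.smul_bdd ‖u‖
    (continuous_const.mul
      (continuous_rqftKernel.comp (continuous_const.prodMk hσ))).aestronglyMeasurable
    (ae_of_all _ fun x => by rw [norm_mul, norm_rqftKernel, mul_one])

lemma alphaT_mul (g : ℝ × ℝ → Hq) (x : ℝ × ℝ) (p : Hq) :
    alphaT g x * p = (g x).re • p + (g (x.1, -x.2)).imI • (qi * p)
      + (g (-x.1, x.2)).imJ • (qj * p) + (g (-x.1, -x.2)).imK • (qk * p) := by
  rw [quaternion_eq_sum (alphaT g x)]
  simp only [add_mul, smul_mul_assoc, one_mul]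
  rfl

lemma enorm_alphaT_sq_eq (g : ℝ × ℝ → Hq) (x : ℝ × ℝ) :
    ‖alphaT g x‖ₑ ^ 2 = ENNReal.ofReal ((g x).re ^ 2) + ENNReal.ofReal ((g (x.1, -x.2)).imI ^ 2)
      + ENNReal.ofReal ((g (-x.1, x.2)).imJ ^ 2) + ENNReal.ofReal ((g (-x.1, -x.2)).imK ^ 2) :=
  enorm_sq_eq _

theorem integral_rqftKernel_mul {g : ℝ × ℝ → Hq} (hg : Integrable g) (ω : ℝ × ℝ) :
    ∫ x, rqftKernel ω x * g x = ∫ x, alphaT g x * rqftKernel ω x := by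
  have hcomp (ℓ : Hq →ₗ[ℝ] ℝ) : Integrable fun x => ℓ (g x) :=
    (LinearMap.toContinuousLinearMap ℓ).integrable_comp hg
  have h₀ : Integrable fun x => (g x).re := hcomp (QuaternionAlgebra.reₗ _ _ _)
  have h₁ : Integrable fun x => (g x).imI := hcomp (QuaternionAlgebra.imIₗ _ _ _)
  have h₂ : Integrable fun x => (g x).imJ := hcomp (QuaternionAlgebra.imJₗ _ _ _)
  have h₃ : Integrable fun x => (g x).imK := hcomp (QuaternionAlgebra.imKₗ _ _ _)
  have h₁' : Integrable fun x : ℝ × ℝ => (g (x.1, -x.2)).imI :=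
    (measurePreserving_neg_snd.integrable_comp h₁.aestronglyMeasurable).2 h₁
  have h₂' : Integrable fun x : ℝ × ℝ => (g (-x.1, x.2)).imJ :=
    (measurePreserving_neg_fst.integrable_comp h₂.aestronglyMeasurable).2 h₂
  have h₃' : Integrable fun x : ℝ × ℝ => (g (-x.1, -x.2)).imK :=
    (measurePreserving_neg_prod.integrable_comp h₃.aestronglyMeasurable).2 h₃
  have hre : Integrable fun x => (g x).re • rqftKernel ω x := by
    simpa using h₀.smul_mul_rqftKernel 1 ω continuous_id
  have r₁ : ∫ x, (g x).imI • (qi * rqftKernel ω (x.1, -x.2))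
      = ∫ x, (g (x.1, -x.2)).imI • (qi * rqftKernel ω x) :=
    measurePreserving_neg_snd.integral_comp_involutive involutive_neg_snd
      fun y z => (g y).imI • (qi * rqftKernel ω z)
  have r₂ : ∫ x, (g x).imJ • (qj * rqftKernel ω (-x.1, x.2))
      = ∫ x, (g (-x.1, x.2)).imJ • (qj * rqftKernel ω x) :=
    measurePreserving_neg_fst.integral_comp_involutive involutive_neg_fst
      fun y z => (g y).imJ • (qj * rqftKernel ω z)
  have r₃ : ∫ x, (g x).imK • (qk * rqftKernel ω (-x.1, -x.2))
      = ∫ x, (g (-x.1, -x.2)).imK • (qk * rqftKernel ω x) :=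
    measurePreserving_neg_prod.integral_comp_involutive involutive_neg_prod
      fun y z => (g y).imK • (qk * rqftKernel ω z)
  simp only [rqftKernel_mul, alphaT_mul]
  rw [integral_add₄ hre (h₁.smul_mul_rqftKernel qi ω (by fun_prop))
      (h₂.smul_mul_rqftKernel qj ω (by fun_prop)) (h₃.smul_mul_rqftKernel qk ω (by fun_prop)),
    integral_add₄ hre (h₁'.smul_mul_rqftKernel qi ω continuous_id')
      (h₂'.smul_mul_rqftKernel qj ω continuous_id') (h₃'.smul_mul_rqftKernel qk ω continuous_id'),
    r₁, r₂, r₃]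

theorem lintegral_enorm_sq_alphaT {g : ℝ × ℝ → Hq} (hg : AEStronglyMeasurable g) :
    ∫⁻ x, ‖alphaT g x‖ₑ ^ 2 = ∫⁻ x, ‖g x‖ₑ ^ 2 := by
  have hm {ℓ : Hq → ℝ} (hℓ : Continuous ℓ) {h : ℝ × ℝ → Hq} (hh : AEStronglyMeasurable h) :
      AEMeasurable fun x => ENNReal.ofReal (ℓ (h x) ^ 2) :=
    ((hℓ.comp_aestronglyMeasurable hh).aemeasurable.pow_const 2).ennreal_ofReal
  have m₀ : AEMeasurable fun x => ENNReal.ofReal ((g x).re ^ 2) := hm Quaternion.continuous_re hg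
  have m₁ : AEMeasurable fun x => ENNReal.ofReal ((g x).imI ^ 2) := hm Quaternion.continuous_imI hg
  have m₂ : AEMeasurable fun x => ENNReal.ofReal ((g x).imJ ^ 2) := hm Quaternion.continuous_imJ hg
  have m₁' : AEMeasurable fun x : ℝ × ℝ => ENNReal.ofReal ((g (x.1, -x.2)).imI ^ 2) :=
    hm Quaternion.continuous_imI (hg.comp_measurePreserving measurePreserving_neg_snd)
  have m₂' : AEMeasurable fun x : ℝ × ℝ => ENNReal.ofReal ((g (-x.1, x.2)).imJ ^ 2) :=
    hm Quaternion.continuous_imJ (hg.comp_measurePreserving measurePreserving_neg_fst)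
  simp only [enorm_alphaT_sq_eq]
  simp only [enorm_sq_eq]
  rw [lintegral_add₄ m₀ m₁' m₂', lintegral_add₄ m₀ m₁ m₂,
    measurePreserving_neg_snd.lintegral_comp_involutive involutive_neg_snd
      fun y => ENNReal.ofReal ((g y).imI ^ 2),
    measurePreserving_neg_fst.lintegral_comp_involutive involutive_neg_fst
      fun y => ENNReal.ofReal ((g y).imJ ^ 2),
    measurePreserving_neg_prod.lintegral_comp_involutive involutive_neg_prod
      fun y => ENNReal.ofReal ((g y).imK ^ 2)]

theorem eLpNorm_two_alphaT {g : ℝ × ℝ → Hq} (hg : AEStronglyMeasurable g) :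
    eLpNorm (alphaT g) 2 volume = eLpNorm g 2 volume := by
  simp only [eLpNorm_eq_lintegral_rpow_enorm_toReal two_ne_zero ofNat_ne_top, toReal_ofNat,
    ENNReal.rpow_two, lintegral_enorm_sq_alphaT hg]

theorem stmt5 (f g : ℝ × ℝ → Hq) (hf : Integrable f) (hg : Integrable g) :
    (∫ x : ℝ × ℝ, Fr f x * g x) = (∫ x : ℝ × ℝ, f x * Fr (alphaT g) x) ∧
      (MemLp g 2 volume → eLpNorm g 2 volume = eLpNorm (alphaT g) 2 volume) := by
  refine ⟨?_, fun _ => (eLpNorm_two_alphaT hg.aestronglyMeasurable).symm⟩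
  calc ∫ x, Fr f x * g x
      = (1 / (2 * π)) • ∫ x, (∫ y, f y * rqftKernel x y) * g x := by
        simp only [Fr_eq_integral_mul_rqftKernel, smul_mul_assoc, integral_smul]
    _ = (1 / (2 * π)) • ∫ y, f y * ∫ x, rqftKernel y x * g x := by
        rw [integral_integral_mul_kernel_mul hf hg continuous_rqftKernel.stronglyMeasurable
          fun x y => (norm_rqftKernel x y).le]
        simp only [rqftKernel_comm]
    _ = ∫ y, f y * Fr (alphaT g) y := by
        simp only [integral_rqftKernel_mul hg, Fr_eq_integral_mul_rqftKernel, mul_smul_comm,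
          integral_smul]
end
end

section
/- Let A₁ = (a₁ b₁; c₁ d₁) and A₂ = (a₂ b₂; c₂ d₂) be real 2×2 matrices with det A₁ = det A₂ = 1 and b₁, b₂ ≠ 0, let f ∈ L¹(ℝ²,ℍ), and define h(x₁,x₂) := e^{i a₁ x₁²/(2b₁)} f(x₁,x₂) e^{j a₂ x₂²/(2b₂)}. Then for all (ω₁,ω₂) ∈ ℝ², (ℒ_s f)(ω₁,ω₂) = (1/√(i b₁)) e^{i d₁ ω₁²/(2b₁)} (ℱ_s h)(ω₁/b₁, ω₂/b₂) e^{j d₂ ω₂²/(2b₂)} (1/√(j b₂)), where for a unit pure imaginary quaternion u and b ≠ 0 one sets √(ub) := √|b| · e^{uπ·sgn(b)/4}. -/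
open MeasureTheory Real ENNReal

noncomputable section

/-- The LCT kernel K_A^u for a matrix A = (a b; c d) with b ≠ 0, evaluated at (x, ω). -/
def Kker (u : Hq) (a b d : ℝ) (x ω : ℝ) : Hq :=
  (Real.sqrt (2 * Real.pi * |b|))⁻¹ •
    (qexp u (-(Real.pi * Real.sign b / 4)) *
      qexp u (a * x ^ 2 / (2 * b) - x * ω / b + d * ω ^ 2 / (2 * b)))

/-- The two-sided quaternion linear canonical transform (case b₁, b₂ ≠ 0). -/
def Ls (a1 b1 d1 a2 b2 d2 : ℝ) (f : ℝ × ℝ → Hq) (ω : ℝ × ℝ) : Hq :=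
  ∫ x : ℝ × ℝ, Kker qi a1 b1 d1 x.1 ω.1 * f x * Kker qj a2 b2 d2 x.2 ω.2

/-- The right-sided quaternion linear canonical transform (case b₁, b₂ ≠ 0). -/
def Lr (a1 b1 d1 a2 b2 d2 : ℝ) (f : ℝ × ℝ → Hq) (ω : ℝ × ℝ) : Hq :=
  ∫ x : ℝ × ℝ, f x * Kker qi a1 b1 d1 x.1 ω.1 * Kker qj a2 b2 d2 x.2 ω.2

/-- The quaternion square root of u·b: sqrt |b| · e^(u π sign b / 4). -/
def sqrtQ (u : Hq) (b : ℝ) : Hq := Real.sqrt |b| • qexp u (Real.pi * Real.sign b / 4)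

/-
Since all values `e^{uθ}` for a fixed `u` with `u² = -1` commute and `e^{uα} e^{uβ} = e^{u(α+β)}`,
each LCT kernel splits as `(2π)^{-1/2}` times a product of three chirps: the phase
`d ω²/(2b)` together with `1/√(ub)`, the Fourier kernel `e^{-u (ω/b) x}`, and the chirp
`e^{u a x²/(2b)}`. Putting the `i`-factors on the left of `f` and the `j`-factors on the right,
the `x`-chirps turn `f` into `h`, and the `ω`-dependent constants leave the integral because left
and right multiplication by a quaternion commute with Bochner integration.
-/

theorem integral_mul_const_of_normedDivisionRing {α 𝕜 : Type*} [MeasurableSpace α]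
    {μ : Measure α} [NormedDivisionRing 𝕜] [NormedAlgebra ℝ 𝕜] [CompleteSpace 𝕜]
    (f : α → 𝕜) (c : 𝕜) : ∫ x, f x * c ∂μ = (∫ x, f x ∂μ) * c := by
  rcases eq_or_ne c 0 with rfl | hc
  · simp
  -- Antilipschitz maps preserve non-integrability too, so no integrability assumption on `f`.
  have hanti : AntilipschitzWith ‖c⁻¹‖₊ ((ContinuousLinearMap.mul ℝ 𝕜).flip c) :=
    AntilipschitzWith.of_le_mul_dist fun x y => by
      simp only [ContinuousLinearMap.flip_apply, ContinuousLinearMap.mul_apply', dist_eq_norm,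
        coe_nnnorm, ← sub_mul]
      calc ‖x - y‖ = ‖(x - y) * c * c⁻¹‖ := by rw [mul_assoc, mul_inv_cancel₀ hc, mul_one]
        _ ≤ ‖c⁻¹‖ * ‖(x - y) * c‖ := by rw [mul_comm ‖c⁻¹‖]; exact norm_mul_le _ _
  exact ((ContinuousLinearMap.mul ℝ 𝕜).flip c).integral_comp_comm' hanti f

theorem integral_const_mul_mul_const {α 𝕜 : Type*} [MeasurableSpace α]
    {μ : Measure α} [NormedDivisionRing 𝕜] [NormedAlgebra ℝ 𝕜] [CompleteSpace 𝕜]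
    (a b : 𝕜) (f : α → 𝕜) : ∫ x, a * f x * b ∂μ = a * (∫ x, f x ∂μ) * b := by
  rw [integral_mul_const_of_normedDivisionRing]
  exact congrArg (· * b) (integral_smul a f)

theorem qi_mul_self : qi * qi = -1 := by
  ext <;> simp only [Quaternion.re_mul, Quaternion.imI_mul, Quaternion.imJ_mul, Quaternion.imK_mul,
    Quaternion.re_neg, Quaternion.imI_neg, Quaternion.imJ_neg, Quaternion.imK_neg, Quaternion.re_one,
    Quaternion.imI_one, Quaternion.imJ_one, Quaternion.imK_one] <;> simp [qi]

theorem qj_mul_self : qj * qj = -1 := by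
  ext <;> simp only [Quaternion.re_mul, Quaternion.imI_mul, Quaternion.imJ_mul, Quaternion.imK_mul,
    Quaternion.re_neg, Quaternion.imI_neg, Quaternion.imJ_neg, Quaternion.imK_neg, Quaternion.re_one,
    Quaternion.imI_one, Quaternion.imJ_one, Quaternion.imK_one] <;> simp [qj]

theorem qexp_zero (u : Hq) : qexp u 0 = 1 := by simp [qexp]

section qexp

variable {u : Hq}

theorem qexp_add (hu : u * u = -1) (α β : ℝ) : qexp u (α + β) = qexp u α * qexp u β := by
  simp only [qexp, add_mul, mul_add, smul_mul_smul_comm, mul_one, one_mul, hu,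
    Real.cos_add, Real.sin_add, smul_neg]
  module

theorem sqrtQ_inv (hu : u * u = -1) {b : ℝ} (hb : b ≠ 0) :
    (sqrtQ u b)⁻¹ = (√|b|)⁻¹ • qexp u (-(π * Real.sign b / 4)) := by
  refine inv_eq_of_mul_eq_one_right ?_
  rw [sqrtQ, smul_mul_smul_comm, ← qexp_add hu, add_neg_cancel, qexp_zero,
    mul_inv_cancel₀ (Real.sqrt_pos.mpr (abs_pos.mpr hb)).ne', one_smul]

theorem Kker_eq_left (hu : u * u = -1) {b : ℝ} (hb : b ≠ 0) (a d x ω : ℝ) :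
    Kker u a b d x ω = (√(2 * π))⁻¹ •
      ((sqrtQ u b)⁻¹ * qexp u (d * ω ^ 2 / (2 * b)) *
        (qexp u (-(ω / b * x)) * qexp u (a * x ^ 2 / (2 * b)))) := by
  rw [Kker, sqrtQ_inv hu hb, smul_mul_assoc, smul_mul_assoc, smul_smul,
    Real.sqrt_mul (by positivity), mul_inv]
  simp only [← qexp_add hu]
  congr 2
  ring

theorem Kker_eq_right (hu : u * u = -1) {b : ℝ} (hb : b ≠ 0) (a d x ω : ℝ) :
    Kker u a b d x ω = (√(2 * π))⁻¹ •
      (qexp u (a * x ^ 2 / (2 * b)) * qexp u (-(ω / b * x)) *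
        (qexp u (d * ω ^ 2 / (2 * b)) * (sqrtQ u b)⁻¹)) := by
  rw [Kker, sqrtQ_inv hu hb, mul_smul_comm, mul_smul_comm, smul_smul,
    Real.sqrt_mul (by positivity), mul_inv]
  simp only [← qexp_add hu]
  congr 2
  ring

end qexp

theorem stmt13_general (a1 b1 d1 a2 b2 d2 : ℝ)
    (hb1 : b1 ≠ 0) (hb2 : b2 ≠ 0)
    (f : ℝ × ℝ → Hq)
    (h : ℝ × ℝ → Hq)
    (hh : ∀ x : ℝ × ℝ,
      h x = qexp qi (a1 * x.1 ^ 2 / (2 * b1)) * f x * qexp qj (a2 * x.2 ^ 2 / (2 * b2))) :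
    ∀ ω : ℝ × ℝ,
      Ls a1 b1 d1 a2 b2 d2 f ω =
        (sqrtQ qi b1)⁻¹ * qexp qi (d1 * ω.1 ^ 2 / (2 * b1)) *
          Fs h (ω.1 / b1, ω.2 / b2) *
          qexp qj (d2 * ω.2 ^ 2 / (2 * b2)) * (sqrtQ qj b2)⁻¹ := by
  rintro ⟨ω1, ω2⟩
  set C1 := (sqrtQ qi b1)⁻¹ * qexp qi (d1 * ω1 ^ 2 / (2 * b1))
  set C2 := qexp qj (d2 * ω2 ^ 2 / (2 * b2)) * (sqrtQ qj b2)⁻¹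
  have hkernel : ∀ x : ℝ × ℝ,
      Kker qi a1 b1 d1 x.1 ω1 * f x * Kker qj a2 b2 d2 x.2 ω2 =
        (1 / (2 * π)) •
          (C1 * (qexp qi (-(ω1 / b1 * x.1)) * h x * qexp qj (-(ω2 / b2 * x.2))) * C2) := by
    intro x
    have hscalar : (√(2 * π))⁻¹ * (√(2 * π))⁻¹ = 1 / (2 * π) := by
      rw [← mul_inv, Real.mul_self_sqrt (by positivity), one_div]
    rw [Kker_eq_left qi_mul_self hb1, Kker_eq_right qj_mul_self hb2, hh]
    simp only [smul_mul_assoc, mul_smul_comm, smul_smul, hscalar, C1, C2, mul_assoc]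
  simp only [Ls, Fs, hkernel, integral_smul, integral_const_mul_mul_const]
  rw [mul_assoc _ _ (sqrtQ qj b2)⁻¹, mul_smul_comm, smul_mul_assoc]

theorem stmt13 (a1 b1 c1 d1 a2 b2 c2 d2 : ℝ)
    (hA1 : a1 * d1 - b1 * c1 = 1) (hA2 : a2 * d2 - b2 * c2 = 1)
    (hb1 : b1 ≠ 0) (hb2 : b2 ≠ 0)
    (f : ℝ × ℝ → Hq) (hf : Integrable f)
    (h : ℝ × ℝ → Hq)
    (hh : ∀ x : ℝ × ℝ,
      h x = qexp qi (a1 * x.1 ^ 2 / (2 * b1)) * f x * qexp qj (a2 * x.2 ^ 2 / (2 * b2))) :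
    ∀ ω : ℝ × ℝ,
      Ls a1 b1 d1 a2 b2 d2 f ω =
        (sqrtQ qi b1)⁻¹ * qexp qi (d1 * ω.1 ^ 2 / (2 * b1)) *
          Fs h (ω.1 / b1, ω.2 / b2) *
          qexp qj (d2 * ω.2 ^ 2 / (2 * b2)) * (sqrtQ qj b2)⁻¹ :=
  stmt13_general a1 b1 d1 a2 b2 d2 hb1 hb2 f h hh
end
end
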